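/- arXiv:2605.04987 — 2 statements merged into one kernel-verified Lean document; each statement's English description precedes it below -/
import Mathlib

section
/- Let F be a family of subsets of [n], each of size at most k, and suppose |F| > r^k for some real r ≥ 1. Then there exists a set X such that F(X) is r-spread and |F(X)| > 1. -/
/-!
Choose `X` maximising the weight `r ^ |X| * |F(X)|`. For `Y` disjoint from `X` we have
`F(X)(Y) = F(X ∪ Y)`, so maximality at `X ∪ Y` is exactly the spread inequality for `Y`, while
for `Y` meeting `X` the family `F(X)(Y)` is empty. The maximum is at least the weight `|F| > r ^ k`
of `∅`, whereas `|F(X)| ≤ 1` would force the weight down to `0` or to `r ^ |X| ≤ r ^ k`.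
-/

/-- For a family `F` of subsets of `[n]` and a set `X ⊆ [n]`,
`F(X) := {F \ X : F ∈ F, X ⊆ F}`. -/
def restrictAt {α : Type*} [DecidableEq α] (F : Finset (Finset α)) (X : Finset α) :
    Finset (Finset α) :=
  (F.filter fun A => X ⊆ A).image fun A => A \ X

/-- A family `G` is `r`-spread if `|G(Y)| ≤ r^{-|Y|}·|G|` for every set `Y`. -/
def IsSpread {α : Type*} [DecidableEq α] (r : ℝ) (F : Finset (Finset α)) : Prop :=
  ∀ Y : Finset α, ((restrictAt F Y).card : ℝ) ≤ r ^ (-(Y.card : ℤ)) * F.card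

open Finset

section Restriction

variable {α : Type*} [DecidableEq α] (F : Finset (Finset α)) {X Y : Finset α}

@[simp]
theorem restrictAt_empty : restrictAt F ∅ = F := by
  simp [restrictAt]

theorem restrictAt_restrictAt (hd : Disjoint Y X) :
    restrictAt (restrictAt F X) Y = restrictAt F (X ∪ Y) := by
  ext B
  simp only [restrictAt, mem_image, mem_filter]
  constructor
  · rintro ⟨_, ⟨⟨A, ⟨hA, hXA⟩, rfl⟩, hY⟩, rfl⟩
    exact ⟨A, ⟨hA, union_subset hXA (subset_sdiff.mp hY).1⟩, sdiff_sdiff_left.symm⟩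
  · rintro ⟨A, ⟨hA, hXY⟩, rfl⟩
    obtain ⟨hXA, hYA⟩ := union_subset_iff.mp hXY
    exact ⟨A \ X, ⟨⟨A, ⟨hA, hXA⟩, rfl⟩, subset_sdiff.mpr ⟨hYA, hd⟩⟩, sdiff_sdiff_left⟩

theorem restrictAt_restrictAt_of_not_disjoint (hd : ¬Disjoint Y X) :
    restrictAt (restrictAt F X) Y = ∅ := by
  refine eq_empty_iff_forall_notMem.mpr fun B hB => hd ?_
  simp only [restrictAt, mem_image, mem_filter] at hB
  obtain ⟨_, ⟨⟨A, -, rfl⟩, hY⟩, -⟩ := hB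
  exact (subset_sdiff.mp hY).2

theorem card_le_of_restrictAt_nonempty {k : ℕ} (hk : ∀ A ∈ F, #A ≤ k)
    (h : (restrictAt F X).Nonempty) : #X ≤ k := by
  obtain ⟨_, hB⟩ := h
  simp only [restrictAt, mem_image, mem_filter] at hB
  obtain ⟨A, ⟨hA, hXA⟩, -⟩ := hB
  exact (card_le_card hXA).trans (hk A hA)

end Restriction

section Weight

variable {α : Type*} [DecidableEq α]

def restrictWeight (r : ℝ) (F : Finset (Finset α)) (X : Finset α) : ℝ :=
  r ^ #X * #(restrictAt F X)

variable {r : ℝ} (F : Finset (Finset α)) {X : Finset α}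

theorem isSpread_restrictAt_of_forall_restrictWeight_le (hr : 0 < r)
    (hX : ∀ Y, restrictWeight r F Y ≤ restrictWeight r F X) :
    IsSpread r (restrictAt F X) := by
  intro Y
  by_cases hd : Disjoint Y X
  · have hmax := hX (X ∪ Y)
    rw [restrictWeight, restrictWeight, card_union_of_disjoint hd.symm, pow_add] at hmax
    rw [restrictAt_restrictAt F hd, zpow_neg, zpow_natCast, inv_mul_eq_div,
      le_div_iff₀ (by positivity)]
    have hpos : 0 < r ^ #X := by positivity
    nlinarith
  · rw [restrictAt_restrictAt_of_not_disjoint F hd, card_empty, Nat.cast_zero]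
    positivity

theorem restrictWeight_le_of_card_restrictAt_le_one (hr : 1 ≤ r) {k : ℕ}
    (hk : ∀ A ∈ F, #A ≤ k) (h : #(restrictAt F X) ≤ 1) : restrictWeight r F X ≤ r ^ k := by
  have hr0 : 0 ≤ r := zero_le_one.trans hr
  interval_cases hc : #(restrictAt F X)
  · simp [restrictWeight, hc, pow_nonneg hr0]
  · have hXk := card_le_of_restrictAt_nonempty F hk (card_pos.mp (by rw [hc]; exact one_pos))
    simpa [restrictWeight, hc] using pow_le_pow_right₀ hr hXk

end Weight

/-- **Lemma 8 of the paper.** If `F` is a family of subsets of `[n]`, each of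
size at most `k`, with `|F| > r^k` for a real `r ≥ 1`, then `F(X)` is `r`-spread
for some set `X` with `|F(X)| > 1`. -/
theorem large_family_has_spread_restriction {n k : ℕ} {r : ℝ} (hr : 1 ≤ r)
    (F : Finset (Finset (Fin n))) (hk : ∀ A ∈ F, A.card ≤ k)
    (hF : r ^ k < (F.card : ℝ)) :
    ∃ X : Finset (Fin n), IsSpread r (restrictAt F X) ∧ 1 < (restrictAt F X).card := by
  obtain ⟨X, -, hmax⟩ := exists_max_image univ (restrictWeight r F) univ_nonempty
  have hmax' : ∀ Y, restrictWeight r F Y ≤ restrictWeight r F X := fun Y => hmax Y (mem_univ Y)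
  have hlarge : r ^ k < restrictWeight r F X :=
    calc r ^ k < #F := hF
      _ = restrictWeight r F ∅ := by simp [restrictWeight]
      _ ≤ restrictWeight r F X := hmax' ∅
  refine ⟨X, isSpread_restrictAt_of_forall_restrictWeight_le F (by linarith) hmax', ?_⟩
  by_contra! hsmall
  exact hlarge.not_ge (restrictWeight_le_of_card_restrictAt_le_one F hr hk hsmall)
end

section
/- Let S ⊂ [n]×[n] be a partial permutation with |S| ≤ n/4 and n − |S| ≥ 4, such that some derangement of [n] contains S in its graph. Then |D_n(S)| ≥ d_{n−|S|} > (n−|S|)!/3, where D_n(S) = {σ \ S : σ ∈ D_n, S ⊆ σ} (permutations identified with their graphs). -/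
/-- The graph of a permutation `σ` of `[n]`, i.e. the set
`{(i, σ i) : i ∈ [n]} ⊆ [n] × [n]`. -/
def permGraph {n : ℕ} (σ : Equiv.Perm (Fin n)) : Finset (Fin n × Fin n) :=
  Finset.univ.image fun i => (i, σ i)

/-!
A derangement `τ` contains `S` iff it agrees with a fixed such derangement `σ` on the domain
of `S`, so it suffices to find `d_m` derangements `σ * ρ` with `ρ` a permutation of the
complement `s` of that domain (`m = |s|`). Such a product has no fixed point iff
`ρ x ≠ σ⁻¹ x` whenever both `x` and `σ⁻¹ x` lie in `s`. These forbidden values form a partial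
injection of `s`; extending it to a permutation `h` of `s`, every `ρ` avoiding `h` pointwise
qualifies, and `ρ ↦ h⁻¹ ρ` matches those `ρ` with the derangements of `s`.

For `m! < 3 d_m` the slightly stronger `m! + 3 ≤ 3 d_m` (`m ≥ 4`) is what survives the
induction through `d_{m+2} = (m+1)(d_m + d_{m+1})`.
-/

open Finset Equiv Nat

section Avoiding

variable {β : Type*} [Fintype β] [DecidableEq β]

theorem card_filter_forall_apply_ne (h : Perm β) :
    #{ρ : Perm β | ∀ x, ρ x ≠ h x} = numDerangements (Fintype.card β) := by
  rw [← card_derangements_eq_numDerangements, ← Fintype.card_subtype]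
  refine Fintype.card_congr ((Equiv.mulLeft h⁻¹).subtypeEquiv fun ρ => ?_)
  simp [derangements, Perm.inv_def, eq_symm_apply, eq_comm]

theorem numDerangements_le_card_filter_forall_apply_ne {p q : β → Prop} [DecidablePred p]
    [DecidablePred q] (e : {x // p x} ≃ {x // q x}) :
    numDerangements (Fintype.card β) ≤ #{ρ : Perm β | ∀ x (hx : p x), ρ x ≠ e ⟨x, hx⟩} := by
  rw [← card_filter_forall_apply_ne e.extendSubtype]
  refine card_le_card (monotone_filter_right _ fun ρ _ hρ x hx => ?_)
  simpa [e.extendSubtype_apply_of_mem x hx] using hρ x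

end Avoiding

section Derangements

variable {α : Type*} [Fintype α] [DecidableEq α]

def Equiv.Perm.symmOn (σ : Perm α) (s : Finset α) :
    {x : s // σ.symm x ∈ s} ≃ {y : s // σ y ∈ s} where
  toFun x := ⟨⟨σ.symm x, x.2⟩, by simp⟩
  invFun y := ⟨⟨σ y, y.2⟩, by simp⟩
  left_inv x := by simp
  right_inv y := by simp

theorem numDerangements_card_le_card_filter_eqOn {σ : Perm α} (hσ : ∀ x, σ x ≠ x)
    (s : Finset α) :
    numDerangements #s ≤ #{τ : Perm α | (∀ x, τ x ≠ x) ∧ ∀ x ∉ s, τ x = σ x} := by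
  rw [← Fintype.card_coe s]
  refine (numDerangements_le_card_filter_forall_apply_ne (σ.symmOn s)).trans
    (card_le_card_of_injOn (fun ρ => σ * Perm.ofSubtype ρ) (fun ρ hρ => ?_)
      fun ρ _ ρ' _ h => Perm.ofSubtype_injective (mul_left_cancel h))
  simp only [coe_filter, Set.mem_ofPred_eq, mem_univ, true_and] at hρ ⊢
  refine ⟨fun x => ?_, fun x hx => by simp [Perm.ofSubtype_apply_of_not_mem ρ hx]⟩
  by_cases hx : x ∈ s
  · rw [Perm.mul_apply, Perm.ofSubtype_apply_of_mem ρ hx, ne_eq, ← eq_symm_apply]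
    intro hfix
    exact hρ ⟨x, hx⟩ (hfix ▸ (ρ ⟨x, hx⟩).2) (Subtype.ext hfix)
  · simpa [Perm.ofSubtype_apply_of_not_mem ρ hx] using hσ x

end Derangements

theorem card_restrictAt {α : Type*} [DecidableEq α] (F : Finset (Finset α)) (X : Finset α) :
    #(restrictAt F X) = #{A ∈ F | X ⊆ A} := by
  refine card_image_of_injOn fun A hA B hB hAB => ?_
  simp only [coe_filter, Set.mem_ofPred_eq] at hA hB
  rw [← sdiff_union_of_subset hA.2, ← sdiff_union_of_subset hB.2]
  exact congrArg (· ∪ X) hAB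

section PermGraph

variable {n : ℕ}

theorem mem_permGraph {σ : Perm (Fin n)} {p : Fin n × Fin n} : p ∈ permGraph σ ↔ σ p.1 = p.2 := by
  simp only [permGraph, mem_image, mem_univ, true_and]
  exact ⟨by rintro ⟨i, rfl⟩; rfl, fun h => ⟨p.1, by rw [h]⟩⟩

theorem permGraph_injective : Function.Injective (permGraph (n := n)) := by
  refine fun σ τ h => Equiv.ext fun i => ?_
  have hi : (i, σ i) ∈ permGraph τ := h ▸ mem_permGraph.2 rfl
  exact (mem_permGraph.1 hi).symm

theorem card_image_fst_of_subset_permGraph {S : Finset (Fin n × Fin n)} {σ : Perm (Fin n)}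
    (hS : S ⊆ permGraph σ) : #(S.image Prod.fst) = #S :=
  card_image_of_injOn fun p hp q hq h =>
    Prod.ext h (by rw [← mem_permGraph.1 (hS hp), ← mem_permGraph.1 (hS hq)]; exact congrArg σ h)

theorem subset_permGraph_of_eqOn {S : Finset (Fin n × Fin n)} {σ τ : Perm (Fin n)}
    (hS : S ⊆ permGraph σ) (h : ∀ x ∈ S.image Prod.fst, τ x = σ x) : S ⊆ permGraph τ :=
  fun p hp => mem_permGraph.2 ((h p.1 (mem_image_of_mem _ hp)).trans (mem_permGraph.1 (hS hp)))

end PermGraph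

theorem factorial_add_three_le_three_mul_numDerangements {m : ℕ} (hm : 4 ≤ m) :
    m ! + 3 ≤ 3 * numDerangements m := by
  obtain ⟨k, rfl⟩ := Nat.exists_eq_add_of_le' hm
  suffices ∀ k, (k + 4)! + 3 ≤ 3 * numDerangements (k + 4) ∧
      (k + 5)! + 3 ≤ 3 * numDerangements (k + 5) from (this k).1
  intro k
  induction k with
  | zero => decide
  | succ k ih =>
    refine ⟨ih.2, ?_⟩
    have hd : numDerangements (k + 6) =
        (k + 5) * (numDerangements (k + 4) + numDerangements (k + 5)) :=
      numDerangements_add_two (k + 4)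
    have h5 : (k + 5)! = (k + 5) * (k + 4)! := factorial_succ _
    have h6 : (k + 6)! = (k + 6) * (k + 5)! := factorial_succ _
    show (k + 6)! + 3 ≤ 3 * numDerangements (k + 6)
    nlinarith [ih.1, ih.2]

theorem derangement_restriction_large_general {n : ℕ} (S : Finset (Fin n × Fin n))
    (hS4 : 4 ≤ n - S.card)
    (hsome : ∃ σ : Equiv.Perm (Fin n), (∀ i, σ i ≠ i) ∧ S ⊆ permGraph σ) :
    numDerangements (n - S.card) ≤
        (restrictAt ((Finset.univ.filter fun σ : Equiv.Perm (Fin n) =>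
          ∀ i, σ i ≠ i).image permGraph) S).card ∧
      ((Nat.factorial (n - S.card) : ℝ) / 3 < (numDerangements (n - S.card) : ℝ)) := by
  obtain ⟨σ, hσ, hσS⟩ := hsome
  refine ⟨?_, ?_⟩
  · have hs : #(S.image Prod.fst)ᶜ = n - #S := by
      rw [card_compl, Fintype.card_fin, card_image_fst_of_subset_permGraph hσS]
    rw [card_restrictAt, filter_image, card_image_of_injective _ permGraph_injective, ← hs]
    refine (numDerangements_card_le_card_filter_eqOn hσ _).trans (card_le_card ?_)
    simp only [subset_iff, mem_filter, mem_univ, true_and]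
    exact fun τ hτ => ⟨hτ.1, subset_permGraph_of_eqOn hσS fun x hx => hτ.2 x (by simpa using hx)⟩
  · have := factorial_add_three_le_three_mul_numDerangements hS4
    rw [div_lt_iff₀ (by norm_num)]
    exact_mod_cast (by omega : (n - S.card)! < numDerangements (n - S.card) * 3)

/-- **Size of restrictions of the family of derangements (used in Lemma 10).**
If `S ⊆ [n] × [n]` is a partial permutation with `|S| ≤ n/4` and `n - |S| ≥ 4`
which is contained in the graph of some derangement of `[n]`, then
`|D_n(S)| ≥ d_{n-|S|} > (n-|S|)!/3`, where `D_n` is the family of graphs of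
derangements of `[n]` and `d_m` the number of derangements of `[m]`. -/
theorem derangement_restriction_large {n : ℕ} (S : Finset (Fin n × Fin n))
    (hScard : (S.card : ℝ) ≤ (n : ℝ) / 4) (hS4 : 4 ≤ n - S.card)
    (hsome : ∃ σ : Equiv.Perm (Fin n), (∀ i, σ i ≠ i) ∧ S ⊆ permGraph σ) :
    numDerangements (n - S.card) ≤
        (restrictAt ((Finset.univ.filter fun σ : Equiv.Perm (Fin n) =>
          ∀ i, σ i ≠ i).image permGraph) S).card ∧
      ((Nat.factorial (n - S.card) : ℝ) / 3 < (numDerangements (n - S.card) : ℝ)) :=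
  derangement_restriction_large_general S hS4 hsome
end
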